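/- arXiv:0905.1991 — 3 statements merged into one kernel-verified Lean document; each statement's English description precedes it below -/
import Mathlib

section
/- Let A be a finite set of positive real numbers. Then |A+A|^2 · |A/A| ≥ |A|^4 / 4. -/
/-!
Sort the lines through the origin of slope `r ∈ A / A` by the number of points of `A × A` they
carry. For consecutive slopes `r < r'` among lines carrying at least `t` points each, adding a point
of one line to a point of the other gives at least `t²` points of `(A + A) × (A + A)`, all distinct
and strictly between the two lines. So if `j + 1` lines carry at least `w` points each then
`j w² ≤ |A + A|²`: the `(j + 1)`-st richest line carries at most `|A + A| / √j` points (and at most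
`|A| ≤ |A + A|` in any case). Summing over the `k = |A / A|` lines,
`|A|² ≤ |A + A| (√k + √(k - 1)) ≤ 2 |A + A| √k`.
-/

open Finset Pointwise

lemma le_mul_sqrt_add_one_sub_sqrt_sub_one {k y C : ℝ} (hk : 0 ≤ k) (hy : 0 ≤ y) (hyC : y ≤ C)
    (h : k * y ^ 2 ≤ C ^ 2) : y ≤ C * (√(k + 1) - √(k - 1)) := by
  rcases le_or_gt k 1 with hk1 | hk1
  · rw [Real.sqrt_eq_zero_of_nonpos (by linarith : k - 1 ≤ 0), sub_zero]
    nlinarith [Real.one_le_sqrt.mpr (by linarith : 1 ≤ k + 1)]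
  · have ha := Real.sq_sqrt (by linarith : 0 ≤ k + 1)
    have hb := Real.sq_sqrt (by linarith : 0 ≤ k - 1)
    have hc := Real.sq_sqrt hk
    have hab : √(k - 1) ≤ √(k + 1) := Real.sqrt_le_sqrt (by linarith)
    have hsum : √(k + 1) + √(k - 1) ≤ 2 * √k := by
      nlinarith [sq_nonneg (√(k + 1) - √(k - 1)), Real.sqrt_nonneg k]
    -- `(√(k+1) - √(k-1)) (√(k+1) + √(k-1)) = 2`
    have hgap : 1 ≤ √k * (√(k + 1) - √(k - 1)) := by
      nlinarith [mul_le_mul_of_nonneg_left hsum (sub_nonneg.mpr hab)]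
    have hyc : y * √k ≤ C := by
      nlinarith [sq_nonneg (y * √k - C), sq_nonneg (y * √k + C), Real.sqrt_nonneg k]
    calc y ≤ y * (√k * (√(k + 1) - √(k - 1))) := le_mul_of_one_le_right hy hgap
      _ = y * √k * (√(k + 1) - √(k - 1)) := by ring
      _ ≤ C * (√(k + 1) - √(k - 1)) := mul_le_mul_of_nonneg_right hyc (sub_nonneg.mpr hab)

theorem sum_le_mul_sqrt_of_card_le_mul_sq_le {ι : Type*} (s : Finset ι) (f : ι → ℕ) (C : ℕ)
    (hfC : ∀ i ∈ s, f i ≤ C) (hrank : ∀ i ∈ s, (#{j ∈ s | f i ≤ f j} - 1) * f i ^ 2 ≤ C ^ 2) :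
    (∑ i ∈ s, f i : ℝ) ≤ C * (√(#s : ℝ) + √((#s : ℝ) - 1)) := by
  classical
  induction s using Finset.induction_on_min_value f with
  | empty => simp [Real.sqrt_eq_zero_of_nonpos]
  | insert a s ha hmin ih =>
    have hrank_s : ∀ i ∈ s, (#{j ∈ s | f i ≤ f j} - 1) * f i ^ 2 ≤ C ^ 2 := fun i hi =>
      le_trans (Nat.mul_le_mul_right _ <| Nat.sub_le_sub_right
          (card_le_card (filter_subset_filter _ (subset_insert a s))) 1)
        (hrank i (mem_insert_of_mem hi))
    have hrank_a : #s * f a ^ 2 ≤ C ^ 2 := by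
      have := hrank a (mem_insert_self a s)
      rwa [filter_true_of_mem (by simpa using hmin), card_insert_of_notMem ha,
        Nat.add_sub_cancel] at this
    have hfa : (f a : ℝ) ≤ C * (√(#s + 1) - √(#s - 1)) :=
      le_mul_sqrt_add_one_sub_sqrt_sub_one (Nat.cast_nonneg _) (Nat.cast_nonneg _)
        (by exact_mod_cast hfC a (mem_insert_self a s)) (by exact_mod_cast hrank_a)
    have ih := ih (fun i hi => hfC i (mem_insert_of_mem hi)) hrank_s
    rw [sum_insert ha, card_insert_of_notMem ha, Nat.cast_add_one, add_sub_cancel_right]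
    linarith

lemma mediant_mem_Ioo {a b c d r r' : ℝ} (hb : 0 < b) (hd : 0 < d) (ha : a = r * b)
    (hc : c = r' * d) (hr : r < r') : (a + c) / (b + d) ∈ Set.Ioo r r' := by
  rw [Set.mem_Ioo, lt_div_iff₀ (by positivity), div_lt_iff₀ (by positivity)]
  subst ha hc
  constructor <;> nlinarith

noncomputable def ratioFiber (A : Finset ℝ) (r : ℝ) : Finset (ℝ × ℝ) :=
  {p ∈ A ×ˢ A | p.1 / p.2 = r}

section RatioFiber

variable {A : Finset ℝ} {r r' : ℝ} {p : ℝ × ℝ}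

lemma mem_ratioFiber : p ∈ ratioFiber A r ↔ p.1 ∈ A ∧ p.2 ∈ A ∧ p.1 / p.2 = r := by
  simp [ratioFiber, and_assoc]

lemma sum_card_ratioFiber (A : Finset ℝ) : ∑ r ∈ A / A, #(ratioFiber A r) = #A ^ 2 := by
  rw [sq, ← card_product]
  exact (card_eq_sum_card_fiberwise fun p hp => by
    obtain ⟨h1, h2⟩ := mem_product.mp hp
    exact div_mem_div h1 h2).symm

lemma card_ratioFiber_le (hA : 0 ∉ A) (r : ℝ) : #(ratioFiber A r) ≤ #A := by
  refine card_le_card_of_injOn Prod.snd (fun p hp => (mem_ratioFiber.mp hp).2.1) ?_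
  intro p hp q hq h
  obtain ⟨-, hp2, hpr⟩ := mem_ratioFiber.mp hp
  obtain ⟨-, -, hqr⟩ := mem_ratioFiber.mp hq
  have hne : p.2 ≠ 0 := fun h0 => hA (h0 ▸ hp2)
  refine Prod.ext ?_ h
  rw [div_eq_iff hne] at hpr
  rw [← h, div_eq_iff hne] at hqr
  rw [hpr, hqr]

lemma fst_eq_mul_snd_of_mem_ratioFiber (hA : ∀ a ∈ A, 0 < a) (hp : p ∈ ratioFiber A r) :
    p.1 = r * p.2 := by
  obtain ⟨-, hp2, hpr⟩ := mem_ratioFiber.mp hp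
  rw [← hpr, div_mul_cancel₀ _ (hA _ hp2).ne']

lemma add_injOn_ratioFiber (hA : ∀ a ∈ A, 0 < a) (hr : r ≠ r') :
    Set.InjOn (fun x : (ℝ × ℝ) × (ℝ × ℝ) => x.1 + x.2)
      ((ratioFiber A r ×ˢ ratioFiber A r' : Finset _) : Set _) := by
  rintro ⟨p, q⟩ hpq ⟨p', q'⟩ hpq' h
  simp only [mem_coe, mem_product] at hpq hpq'
  have hp := fst_eq_mul_snd_of_mem_ratioFiber hA hpq.1
  have hq := fst_eq_mul_snd_of_mem_ratioFiber hA hpq.2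
  have hp' := fst_eq_mul_snd_of_mem_ratioFiber hA hpq'.1
  have hq' := fst_eq_mul_snd_of_mem_ratioFiber hA hpq'.2
  obtain ⟨h1, h2⟩ := Prod.ext_iff.mp h
  simp only [Prod.fst_add, Prod.snd_add] at h1 h2
  have hp2 : p.2 = p'.2 := by
    have : (r - r') * (p.2 - p'.2) = 0 := by linear_combination h1 - hp - hq + hp' + hq' - r' * h2
    exact sub_eq_zero.mp ((mul_eq_zero.mp this).resolve_left (sub_ne_zero.mpr hr))
  have hq2 : q.2 = q'.2 := by linarith
  simp only [Prod.ext_iff, hp, hq, hp', hq', hp2, hq2, and_self]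

lemma div_add_mem_Ioo_of_mem_ratioFiber (hA : ∀ a ∈ A, 0 < a) {q : ℝ × ℝ}
    (hp : p ∈ ratioFiber A r) (hq : q ∈ ratioFiber A r') (hr : r < r') :
    (p + q).1 / (p + q).2 ∈ Set.Ioo r r' :=
  mediant_mem_Ioo (hA _ (mem_ratioFiber.mp hp).2.1) (hA _ (mem_ratioFiber.mp hq).2.1)
    (fst_eq_mul_snd_of_mem_ratioFiber hA hp) (fst_eq_mul_snd_of_mem_ratioFiber hA hq) hr

theorem sum_card_mul_card_ratioFiber_le (hA : ∀ a ∈ A, 0 < a) {k : ℕ} (e : Fin (k + 1) → ℝ)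
    (he : StrictMono e) :
    ∑ i : Fin k, #(ratioFiber A (e i.castSucc)) * #(ratioFiber A (e i.succ)) ≤ #(A + A) ^ 2 := by
  set T := univ.sigma fun i : Fin k => ratioFiber A (e i.castSucc) ×ˢ ratioFiber A (e i.succ)
  let σ : (Σ _ : Fin k, (ℝ × ℝ) × (ℝ × ℝ)) → ℝ × ℝ := fun x => x.2.1 + x.2.2
  have hslope : ∀ x ∈ T, (σ x).1 / (σ x).2 ∈ Set.Ioo (e x.1.castSucc) (e x.1.succ) := by
    rintro ⟨i, p, q⟩ hx
    simp only [T, mem_sigma, mem_product] at hx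
    exact div_add_mem_Ioo_of_mem_ratioFiber hA hx.2.1 hx.2.2 (he Fin.castSucc_lt_succ)
  have hsep : ∀ x ∈ T, ∀ y ∈ T, x.1 < y.1 → σ x ≠ σ y := by
    intro x hx y hy hxy hσ
    have hx' := (hslope x hx).2
    have hy' := (hslope y hy).1
    have := he.monotone (Fin.succ_le_castSucc_iff.mpr hxy)
    rw [hσ] at hx'
    linarith
  have hinj : Set.InjOn σ T := by
    rintro ⟨i, p, q⟩ hx ⟨j, p', q'⟩ hy h
    obtain rfl : i = j := by
      by_contra hij
      rcases lt_or_gt_of_ne hij with hij | hij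
      exacts [hsep _ hx _ hy hij h, hsep _ hy _ hx hij h.symm]
    simp only [T, mem_coe, mem_sigma, mem_univ, true_and] at hx hy
    have hpq : (p, q) = (p', q') :=
      add_injOn_ratioFiber hA (he Fin.castSucc_lt_succ).ne (mem_coe.mpr hx) (mem_coe.mpr hy) h
    rw [hpq]
  have hmaps : Set.MapsTo σ T ((A + A) ×ˢ (A + A) : Finset _) := by
    rintro ⟨i, p, q⟩ hx
    simp only [T, mem_coe, mem_sigma, mem_product, mem_ratioFiber] at hx
    exact mem_coe.mpr <| mem_product.mpr
      ⟨add_mem_add hx.2.1.1 hx.2.2.1, add_mem_add hx.2.1.2.1 hx.2.2.2.1⟩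
  calc ∑ i : Fin k, #(ratioFiber A (e i.castSucc)) * #(ratioFiber A (e i.succ))
      = #T := by simp only [T, card_sigma, card_product]
    _ ≤ #((A + A) ×ˢ (A + A)) := card_le_card_of_injOn σ hmaps hinj
    _ = #(A + A) ^ 2 := by rw [card_product, sq]

end RatioFiber

theorem card_sub_one_mul_sq_le_card_add_sq {A : Finset ℝ} (hA : ∀ a ∈ A, 0 < a) (R : Finset ℝ)
    (t : ℕ) (ht : ∀ r ∈ R, t ≤ #(ratioFiber A r)) : (#R - 1) * t ^ 2 ≤ #(A + A) ^ 2 := by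
  rcases R.eq_empty_or_nonempty with rfl | hR
  · simp
  obtain ⟨k, hk⟩ := Nat.exists_eq_add_one_of_ne_zero hR.card_pos.ne'
  set e := R.orderEmbOfFin hk
  have hte : ∀ i, t ≤ #(ratioFiber A (e i)) := fun i => ht _ (R.orderEmbOfFin_mem hk i)
  calc (#R - 1) * t ^ 2 = ∑ _i : Fin k, t * t := by simp [hk, sq]
    _ ≤ ∑ i : Fin k, #(ratioFiber A (e i.castSucc)) * #(ratioFiber A (e i.succ)) :=
      sum_le_sum fun i _ => Nat.mul_le_mul (hte _) (hte _)
    _ ≤ #(A + A) ^ 2 := sum_card_mul_card_ratioFiber_le hA e e.strictMono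

theorem sum_division_estimate (A : Finset ℝ) (hA : ∀ a ∈ A, 0 < a) :
    ((A + A).card : ℝ) ^ 2 * ((A / A).card : ℝ) ≥ (A.card : ℝ) ^ 4 / 4 := by
  have hrank : ∀ r ∈ A / A, (#{r' ∈ A / A | #(ratioFiber A r) ≤ #(ratioFiber A r')} - 1) *
      #(ratioFiber A r) ^ 2 ≤ #(A + A) ^ 2 := fun r _ =>
    card_sub_one_mul_sq_le_card_add_sq hA _ _ fun _ hr' => (mem_filter.mp hr').2
  have hfib : ∀ r ∈ A / A, #(ratioFiber A r) ≤ #(A + A) := fun r _ =>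
    (card_ratioFiber_le (fun h => lt_irrefl 0 (hA 0 h)) r).trans card_le_card_add_self
  have hsum : (#A : ℝ) ^ 2 ≤ #(A + A) * (√(#(A / A) : ℝ) + √((#(A / A) : ℝ) - 1)) := by
    have := sum_le_mul_sqrt_of_card_le_mul_sq_le (A / A) _ _ hfib hrank
    rwa [← Nat.cast_sum, sum_card_ratioFiber, Nat.cast_pow] at this
  have hsqrt : √(#(A / A) : ℝ) + √((#(A / A) : ℝ) - 1) ≤ 2 * √(#(A / A) : ℝ) := by
    linarith [Real.sqrt_le_sqrt (by linarith : (#(A / A) : ℝ) - 1 ≤ #(A / A))]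
  have hsq : ((#A : ℝ) ^ 2) ^ 2 ≤ (2 * #(A + A) * √(#(A / A) : ℝ)) ^ 2 := by
    gcongr
    nlinarith [(Nat.cast_nonneg #(A + A) : (0 : ℝ) ≤ _)]
  rw [mul_pow, Real.sq_sqrt (Nat.cast_nonneg _)] at hsq
  linarith
end

section
/- Let A be a finite set of positive real numbers. Then max{ |{a^2 + b^2 : a,b ∈ A}|, |{a/b : a,b ∈ A}| } ≥ |A|^{4/3} / 2. (Equivalently: the radius-set and the angle-set of the Cartesian product A×A ⊂ ℝ² cannot both be small, since the radius-set of A×A has the same cardinality as {a^2+b^2 : a,b ∈ A} and the angle-set has the same cardinality as A/A.) -/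
/-!
Put `B = {a² : a ∈ A}`: then `B + B` is the set of squared radii and `|B / B| = |A / A|`. The lines
through the origin meeting the grid `B × B` are indexed by `B / B`. If two of them are consecutive
in slope, the sums of a point on the first and a point on the second are pairwise distinct and lie
strictly between the two lines, so these sumsets are disjoint subsets of `(B + B) × (B + B)`.
Hence at most `1 + (|B + B| / k)²` lines carry `k` or more points. Summing over `k` and comparing
with the trivial bound `|B / B|` below `k ≈ |B + B| / √|B / B|` gives
`|B|² ≤ |B| + |B / B| + 2 |B + B| √|B / B|`, which forces `max (|B + B|, |B / B|) ≥ |B|^{4/3} / 2`.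
-/

open Finset Pointwise

noncomputable def rayFiber (G : Finset (ℝ × ℝ)) (σ : ℝ) : Finset (ℝ × ℝ) :=
  {p ∈ G | 0 < p.2 ∧ p.1 = σ * p.2}

section RayFiber

variable {G : Finset (ℝ × ℝ)} {σ ν : ℝ}

lemma card_rayFiber_product_le (s t : Finset ℝ) (σ : ℝ) :
    #(rayFiber (s ×ˢ t) σ) ≤ #t := by
  refine card_le_card_of_injOn Prod.snd (fun p hp => ?_) fun p hp q hq h => ?_
  · simp only [rayFiber, coe_filter, mem_product] at hp
    exact hp.1.2
  · simp only [rayFiber, coe_filter] at hp hq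
    exact Prod.ext (by rw [hp.2.2, hq.2.2, h]) h

lemma card_rayFiber_add_rayFiber (h : σ ≠ ν) :
    #(rayFiber G σ + rayFiber G ν) = #(rayFiber G σ) * #(rayFiber G ν) := by
  rw [card_add_iff]
  rintro ⟨p, q⟩ hpq ⟨p', q'⟩ hpq' hsum
  simp only [rayFiber, coe_filter, Set.mem_prod] at hpq hpq' hsum
  obtain ⟨⟨-, -, hp⟩, -, -, hq⟩ := hpq
  obtain ⟨⟨-, -, hp'⟩, -, -, hq'⟩ := hpq'
  have h1 : p.1 + q.1 = p'.1 + q'.1 := congrArg Prod.fst hsum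
  have h2 : p.2 + q.2 = p'.2 + q'.2 := congrArg Prod.snd hsum
  have hp2 : p.2 = p'.2 := by
    have : (σ - ν) * (p.2 - p'.2) = 0 := by
      linear_combination h1 - ν * h2 - hp + hp' - hq + hq'
    exact sub_eq_zero.mp ((mul_eq_zero.mp this).resolve_left (sub_ne_zero.mpr h))
  have hq2 : q.2 = q'.2 := by linarith
  simp only [Prod.mk.injEq]
  exact ⟨Prod.ext (by rw [hp, hp', hp2]) hp2, Prod.ext (by rw [hq, hq', hq2]) hq2⟩

lemma lt_of_mem_rayFiber_add_rayFiber (h : σ < ν) {z : ℝ × ℝ}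
    (hz : z ∈ rayFiber G σ + rayFiber G ν) : 0 < z.2 ∧ σ * z.2 < z.1 ∧ z.1 < ν * z.2 := by
  obtain ⟨p, hp, q, hq, rfl⟩ := mem_add.mp hz
  simp only [rayFiber, mem_filter] at hp hq
  obtain ⟨-, hp0, hp⟩ := hp
  obtain ⟨-, hq0, hq⟩ := hq
  simp only [Prod.fst_add, Prod.snd_add, hp, hq]
  refine ⟨by positivity, by nlinarith, by nlinarith⟩

lemma card_sub_one_mul_sq_le_card_add {T : Finset ℝ} {τ : ℕ}
    (hT : ∀ σ ∈ T, τ ≤ #(rayFiber G σ)) : (#T - 1) * τ ^ 2 ≤ #(G + G) := by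
  rcases T.eq_empty_or_nonempty with rfl | hne
  · simp
  set E := T.erase (T.max' hne)
  have hnext : ∀ σ ∈ E, ∃ ν ∈ T, σ < ν ∧ ∀ t ∈ T, σ < t → ν ≤ t := fun σ hσ =>
    exists_next_right ⟨_, T.max'_mem hne, (T.le_max' σ (mem_of_mem_erase hσ)).lt_of_ne
      (ne_of_mem_erase hσ)⟩
  choose! next hnextT hlt hmin using hnext
  set S := fun σ => rayFiber G σ + rayFiber G (next σ)
  have hdisj : (E : Set ℝ).PairwiseDisjoint S := by
    suffices ∀ σ ∈ E, ∀ σ' ∈ E, σ < σ' → Disjoint (S σ) (S σ') from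
      fun σ hσ σ' hσ' hne =>
        hne.lt_or_gt.elim (this σ hσ σ' hσ') fun h => (this σ' hσ' σ hσ h).symm
    intro σ hσ σ' hσ' hσσ'
    refine disjoint_left.mpr fun z hz hz' => ?_
    obtain ⟨hz0, -, hz_lt⟩ := lt_of_mem_rayFiber_add_rayFiber (hlt σ hσ) hz
    obtain ⟨-, hz_gt, -⟩ := lt_of_mem_rayFiber_add_rayFiber (hlt σ' hσ') hz'
    have := hmin σ hσ σ' (mem_of_mem_erase hσ') hσσ'
    nlinarith
  calc (#T - 1) * τ ^ 2 = ∑ σ ∈ E, τ * τ := by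
        rw [sum_const, card_erase_of_mem (T.max'_mem hne), smul_eq_mul, sq]
    _ ≤ ∑ σ ∈ E, #(S σ) := sum_le_sum fun σ hσ => by
        rw [card_rayFiber_add_rayFiber (hlt σ hσ).ne]
        exact Nat.mul_le_mul (hT σ (mem_of_mem_erase hσ)) (hT _ (hnextT σ hσ))
    _ = #(E.biUnion S) := (card_biUnion hdisj).symm
    _ ≤ #(G + G) := card_le_card <| biUnion_subset.mpr fun σ _ =>
        add_subset_add (filter_subset _ _) (filter_subset _ _)

end RayFiber

lemma sum_eq_sum_Icc_card_filter_le {ι : Type*} (S : Finset ι) (m : ι → ℕ) {n : ℕ}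
    (hm : ∀ i ∈ S, m i ≤ n) : ∑ i ∈ S, m i = ∑ k ∈ Icc 1 n, #{i ∈ S | k ≤ m i} := by
  calc ∑ i ∈ S, m i = ∑ i ∈ S, #{k ∈ Icc 1 n | k ≤ m i} := sum_congr rfl fun i hi => by
        have hIcc : {k ∈ Icc 1 n | k ≤ m i} = Icc 1 (m i) := by
          ext k; simp only [mem_filter, mem_Icc]; have := hm i hi; omega
        simp [hIcc]
    _ = ∑ k ∈ Icc 1 n, #{i ∈ S | k ≤ m i} := by simp only [card_filter]; exact sum_comm

lemma sum_Icc_le_add_two_mul_mul_sqrt {c : ℕ → ℝ} {K L : ℝ} (hK : 0 < K) (hL : 0 < L)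
    (hcK : ∀ k, c k ≤ K) (hcL : ∀ k, 1 ≤ k → c k ≤ 1 + L ^ 2 / k ^ 2) (n : ℕ) :
    ∑ k ∈ Icc 1 n, c k ≤ n + K + 2 * L * √K := by
  set r := L / √K
  have hr : 0 < r := by positivity
  set t := ⌈r⌉₊
  have ht : 0 < t := Nat.ceil_pos.mpr hr
  have hlow : ∑ k ∈ Icc 1 n with k ≤ t, c k ≤ (r + 1) * K := by
    calc ∑ k ∈ Icc 1 n with k ≤ t, c k ≤ #{k ∈ Icc 1 n | k ≤ t} • K :=
          sum_le_card_nsmul _ _ _ fun k _ => hcK k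
      _ ≤ t * K := by
          rw [nsmul_eq_mul]
          gcongr
          calc #{k ∈ Icc 1 n | k ≤ t} ≤ #(Icc 1 t) := by
                gcongr; intro k; simp only [mem_filter, mem_Icc]; omega
            _ = t := by simp
      _ ≤ (r + 1) * K := by gcongr; exact (Nat.ceil_lt_add_one hr.le).le
  have hhigh : ∑ k ∈ Icc 1 n with ¬ k ≤ t, c k ≤ n + L ^ 2 / r := by
    calc ∑ k ∈ Icc 1 n with ¬ k ≤ t, c k
        ≤ ∑ k ∈ Icc 1 n with ¬ k ≤ t, (1 + L ^ 2 * ((k : ℝ) ^ 2)⁻¹) :=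
          sum_le_sum fun k hk => by
            rw [← div_eq_mul_inv]; exact hcL k (mem_Icc.mp (mem_filter.mp hk).1).1
      _ ≤ ∑ k ∈ Ioc t n, (1 + L ^ 2 * ((k : ℝ) ^ 2)⁻¹) := by
          refine sum_le_sum_of_subset_of_nonneg (fun k hk => ?_) fun _ _ _ => by positivity
          simp only [mem_filter, mem_Icc, mem_Ioc] at hk ⊢
          omega
      _ ≤ n + L ^ 2 * (t : ℝ)⁻¹ := by
          have hinv : ∑ k ∈ Ioc t n, ((k : ℝ) ^ 2)⁻¹ ≤ (t : ℝ)⁻¹ := by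
            rcases le_or_gt t n with htn | htn
            · exact (sum_Ioc_inv_sq_le_sub ht.ne' htn).trans (sub_le_self _ (by positivity))
            · simp [Ioc_eq_empty_of_le htn.le]
          rw [sum_add_distrib, ← mul_sum, sum_const, Nat.card_Ioc, nsmul_one]
          gcongr
          exact_mod_cast n.sub_le t
      _ ≤ n + L ^ 2 / r := by
          rw [div_eq_mul_inv]; gcongr; exact Nat.le_ceil r
  calc ∑ k ∈ Icc 1 n, c k = _ := (sum_filter_add_sum_filter_not _ _ _).symm
    _ ≤ (r + 1) * K + (n + L ^ 2 / r) := add_le_add hlow hhigh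
    _ = n + K + 2 * L * √K := by
        have hsK : 0 < √K := by positivity
        have := Real.sq_sqrt hK.le
        simp only [r]
        field_simp
        linear_combination (-L) * this

lemma pow_four_le_eight_mul_pow_three {x M : ℝ} (hx : 0 ≤ x) (hxM : x ≤ M)
    (h : x ^ 2 ≤ x + M + 2 * M * √M) : x ^ 4 ≤ 8 * M ^ 3 := by
  rcases le_or_gt M 8 with hM | hM
  · have hx3 : x ^ 3 ≤ M ^ 3 := by gcongr
    nlinarith [pow_nonneg hx 3]
  · set s := √M
    have hs : s ^ 2 = M := Real.sq_sqrt (by linarith)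
    have hs0 : 0 ≤ s := Real.sqrt_nonneg M
    have hs2 : s ^ 2 - 2 * s - 1 ≥ 0 := by nlinarith
    have hx2 : x ^ 2 ≤ 2 * s ^ 2 * (1 + s) := by rw [← hs] at hxM h; nlinarith
    calc x ^ 4 = (x ^ 2) ^ 2 := by ring
      _ ≤ (2 * s ^ 2 * (1 + s)) ^ 2 := by gcongr
      _ ≤ 8 * (s ^ 2) ^ 3 := by nlinarith [pow_nonneg hs0 4]
      _ = 8 * M ^ 3 := by rw [hs]

lemma rpow_four_div_three_div_two_le {x M : ℝ} (hx : 0 ≤ x) (hM : 0 ≤ M)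
    (h : x ^ 4 ≤ 8 * M ^ 3) : x ^ ((4 : ℝ) / 3) / 2 ≤ M := by
  refine le_of_pow_le_pow_left₀ three_ne_zero hM ?_
  rw [div_pow, ← Real.rpow_natCast, ← Real.rpow_mul hx]
  norm_num
  linarith

theorem sq_card_le_card_add_card_div_add_mul_sqrt (B : Finset ℝ) (hB : ∀ b ∈ B, 0 < b) :
    (#B : ℝ) ^ 2 ≤ #B + #(B / B) + 2 * #(B + B) * √(#(B / B) : ℝ) := by
  rcases B.eq_empty_or_nonempty with rfl | hne
  · simp
  set G := B ×ˢ B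
  have hfiber : ∀ σ, {p ∈ G | p.1 / p.2 = σ} = rayFiber G σ := fun σ => by
    refine filter_congr fun p hp => ?_
    have hp2 := hB _ (mem_product.mp hp).2
    rw [div_eq_iff hp2.ne']
    exact ⟨fun h => ⟨hp2, h⟩, And.right⟩
  have hsum : ∑ σ ∈ B / B, #(rayFiber G σ) = #B ^ 2 := by
    rw [← image_div_product]
    simp_rw [← hfiber]
    rw [← card_eq_sum_card_image, card_product, sq]
  have hGG : #(G + G) = #(B + B) ^ 2 := by rw [product_add_product_comm, card_product, sq]
  have hrich : ∀ k : ℕ, 1 ≤ k →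
      (#{σ ∈ B / B | k ≤ #(rayFiber G σ)} : ℝ) ≤ 1 + (#(B + B) : ℝ) ^ 2 / k ^ 2 := by
    intro k hk
    set T := {σ ∈ B / B | k ≤ #(rayFiber G σ)}
    have h := card_sub_one_mul_sq_le_card_add (T := T) fun σ hσ => (mem_filter.mp hσ).2
    rw [hGG] at h
    have hT : (#T : ℝ) - 1 ≤ (#T - 1 : ℕ) :=
      sub_le_iff_le_add.mpr (by exact_mod_cast (by omega : #T ≤ #T - 1 + 1))
    rw [← sub_le_iff_le_add', le_div_iff₀ (by positivity)]
    calc ((#T : ℝ) - 1) * k ^ 2 ≤ ((#T - 1 : ℕ) : ℝ) * k ^ 2 := by gcongr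
      _ ≤ (#(B + B) : ℝ) ^ 2 := by exact_mod_cast h
  have hbound := sum_Icc_le_add_two_mul_mul_sqrt
    (Nat.cast_pos.mpr (hne.div hne).card_pos) (Nat.cast_pos.mpr (hne.add hne).card_pos)
    (fun k => Nat.cast_le.mpr (card_le_card (filter_subset _ _))) hrich #B
  calc (#B : ℝ) ^ 2 = ((∑ σ ∈ B / B, #(rayFiber G σ) : ℕ) : ℝ) := by
        rw [hsum]; push_cast; rfl
    _ = ∑ k ∈ Icc 1 #B, (#{σ ∈ B / B | k ≤ #(rayFiber G σ)} : ℝ) := by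
        rw [sum_eq_sum_Icc_card_filter_le _ _ fun σ _ => card_rayFiber_product_le B B σ]
        push_cast; rfl
    _ ≤ _ := hbound

lemma image_sq_add_image_sq (A : Finset ℝ) :
    A.image (· ^ 2) + A.image (· ^ 2) = (A ×ˢ A).image (fun p => p.1 ^ 2 + p.2 ^ 2) := by
  ext z
  simp [mem_add, and_assoc]

lemma card_image_sq_div_image_sq {A : Finset ℝ} (hA : ∀ a ∈ A, 0 < a) :
    #(A.image (· ^ 2) / A.image (· ^ 2)) = #(A / A) := by
  rw [show A.image (· ^ 2) / A.image (· ^ 2) = (A / A).image (· ^ 2) from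
    (image_image₂_distrib fun a b => div_pow a b 2).symm]
  refine card_image_of_injOn ((pow_left_strictMonoOn₀ two_ne_zero).injOn.mono fun q hq => ?_)
  obtain ⟨a, ha, b, hb, rfl⟩ := mem_div.mp hq
  exact (div_pos (hA a ha) (hA b hb)).le

theorem radius_angle_estimate (A : Finset ℝ) (hA : ∀ a ∈ A, 0 < a) :
    (max (((A ×ˢ A).image (fun p => p.1 ^ 2 + p.2 ^ 2)).card)
        (((A ×ˢ A).image (fun p => p.1 / p.2)).card) : ℝ)
      ≥ (A.card : ℝ) ^ ((4 : ℝ) / 3) / 2 := by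
  rcases A.eq_empty_or_nonempty with rfl | hne
  · simp
  set B := A.image (· ^ 2)
  have hB : ∀ b ∈ B, 0 < b := by simpa [B] using fun a ha => pow_pos (hA a ha) 2
  have hcardB : #B = #A :=
    card_image_of_injOn ((pow_left_strictMonoOn₀ two_ne_zero).injOn.mono fun a ha => (hA a ha).le)
  set M : ℝ := max (#((A ×ˢ A).image (fun p => p.1 ^ 2 + p.2 ^ 2)) : ℝ)
    #((A ×ˢ A).image (fun p => p.1 / p.2))
  have hL : (#(B + B) : ℝ) ≤ M := image_sq_add_image_sq A ▸ le_max_left _ _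
  have hK : (#(B / B) : ℝ) ≤ M := by
    rw [card_image_sq_div_image_sq hA, ← image_div_product]; exact le_max_right _ _
  have hn : (#A : ℝ) ≤ M :=
    hcardB ▸ (Nat.cast_le.mpr (card_le_card_add_left (hne.image _))).trans hL
  have hmain : (#A : ℝ) ^ 2 ≤ #A + M + 2 * M * √M := by
    have := sq_card_le_card_add_card_div_add_mul_sqrt B hB
    rw [hcardB] at this
    exact this.trans (by gcongr)
  exact rpow_four_div_three_div_two_le (by positivity) (by positivity)
    (pow_four_le_eight_mul_pow_three (by positivity) hn hmain)
end

section
/- Let A be a finite set of positive real numbers and let n be a positive integer. Then |A+A|^2 ≥ n · |{(a,b) ∈ A×A : m(a/b) ≥ n}|, where for a real number z, m(z) = |{(c,d) ∈ A×A : c/d = z}| is the number of representations of z as a ratio of two elements of A. -/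
open Finset Pointwise

/-!
Order the ratios `z` with `m z ≥ n` increasingly and look at the points of `A × A` on the
lines `x = z y`. Sums `p + q` with `p`, `q` on two distinct lines through the origin are
pairwise distinct and their ratio `x / y` lies strictly between those of the two lines, so two
consecutive lines with `k` and `l ≥ n` points contribute `k * l ≥ n * k` points of
`(A + A) × (A + A)`, and different consecutive pairs contribute disjoint sets. The line of
largest ratio `z` is paired instead with the points `(max A, d)`, `d` a second coordinate on
it: these lie on a vertical line, and their sums with points of that line have ratio at
least `z`.
-/

theorem Finset.card_add_eq_mul_of_disjoint {R M : Type*} [Ring R] [AddCommGroup M] [Module R M]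
    [DecidableEq M] {U V : Submodule R M} (hUV : Disjoint U V) {P Q : Finset M}
    (hP : ∀ p ∈ P, ∀ p' ∈ P, p - p' ∈ U) (hQ : ∀ q ∈ Q, ∀ q' ∈ Q, q - q' ∈ V) :
    #(P + Q) = #P * #Q := by
  rw [card_add_iff]
  rintro ⟨p, q⟩ ⟨hp, hq⟩ ⟨p', q'⟩ ⟨hp', hq'⟩ (hsum : p + q = p' + q')
  have hpq : p - p' = q' - q := by rw [sub_eq_sub_iff_add_eq_add, hsum, add_comm]
  obtain rfl : p = p' := sub_eq_zero.1 <|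
    Submodule.disjoint_def.1 hUV _ (hP p hp p' hp') (hpq ▸ hQ q' hq' q hq)
  exact Prod.ext rfl (add_left_cancel hsum)

def slopeLine (a : ℝ) : Submodule ℝ (ℝ × ℝ) :=
  LinearMap.ker (LinearMap.fst ℝ ℝ ℝ - a • LinearMap.snd ℝ ℝ ℝ)

@[simp]
theorem mem_slopeLine {a : ℝ} {x : ℝ × ℝ} : x ∈ slopeLine a ↔ x.1 = a * x.2 := by
  simp [slopeLine, sub_eq_zero]

theorem disjoint_slopeLine {a b : ℝ} (hab : a ≠ b) : Disjoint (slopeLine a) (slopeLine b) := by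
  refine Submodule.disjoint_def.2 fun x hxa hxb => ?_
  rw [mem_slopeLine] at hxa hxb
  have hx2 : x.2 = 0 := by
    have : (a - b) * x.2 = 0 := by linear_combination hxb - hxa
    exact (mul_eq_zero.1 this).resolve_left (sub_ne_zero.2 hab)
  ext <;> simp [hxa, hx2]

theorem disjoint_slopeLine_ker_fst {a : ℝ} (ha : a ≠ 0) :
    Disjoint (slopeLine a) (LinearMap.ker (LinearMap.fst ℝ ℝ ℝ)) := by
  refine Submodule.disjoint_def.2 fun x hxa hx1 => ?_
  rw [mem_slopeLine] at hxa
  rw [LinearMap.mem_ker, LinearMap.fst_apply] at hx1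
  have hx2 : x.2 = 0 := (mul_eq_zero.1 (hxa ▸ hx1)).resolve_left ha
  ext <;> simp [hx1, hx2]

theorem mul_add_mul_div_add_mem_Ioo {a b x y : ℝ} (hx : 0 < x) (hy : 0 < y) (hab : a < b) :
    (a * x + b * y) / (x + y) ∈ Set.Ioo a b := by
  constructor
  · rw [lt_div_iff₀ (by positivity)]; nlinarith
  · rw [div_lt_iff₀ (by positivity)]; nlinarith

noncomputable def ratioLine (A : Finset ℝ) (z : ℝ) : Finset (ℝ × ℝ) :=
  (A ×ˢ A).filter (fun p => p.1 / p.2 = z)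

theorem ratioLine_subset_product (A : Finset ℝ) (z : ℝ) : ratioLine A z ⊆ A ×ˢ A :=
  filter_subset _ _

theorem snd_pos_of_mem_ratioLine {A : Finset ℝ} (hA : ∀ a ∈ A, 0 < a) {z : ℝ} {p : ℝ × ℝ}
    (hp : p ∈ ratioLine A z) : 0 < p.2 :=
  hA _ (mem_product.1 (ratioLine_subset_product A z hp)).2

theorem ratioLine_subset_slopeLine {A : Finset ℝ} (hA : ∀ a ∈ A, 0 < a) (z : ℝ) :
    (ratioLine A z : Set (ℝ × ℝ)) ⊆ slopeLine z := by
  intro p hp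
  rw [SetLike.mem_coe, mem_slopeLine, ← (mem_filter.1 hp).2,
    div_mul_cancel₀ _ (snd_pos_of_mem_ratioLine hA hp).ne']

theorem sub_mem_slopeLine_of_mem_ratioLine {A : Finset ℝ} (hA : ∀ a ∈ A, 0 < a) {z : ℝ} :
    ∀ p ∈ ratioLine A z, ∀ p' ∈ ratioLine A z, p - p' ∈ slopeLine z :=
  fun _ hp _ hp' =>
    sub_mem (ratioLine_subset_slopeLine hA z hp) (ratioLine_subset_slopeLine hA z hp')

theorem add_subset_sumset_product {A : Finset ℝ} {P Q : Finset (ℝ × ℝ)} (hP : P ⊆ A ×ˢ A)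
    (hQ : Q ⊆ A ×ˢ A) : P + Q ⊆ (A + A) ×ˢ (A + A) :=
  product_add_product_comm A A A A ▸ add_subset_add hP hQ

noncomputable def sumsetSector (A : Finset ℝ) (I : Set ℝ) : Finset (ℝ × ℝ) := by
  classical exact {q ∈ (A + A) ×ˢ (A + A) | q.1 / q.2 ∈ I}

section sumsetSector

variable {A : Finset ℝ} {I J : Set ℝ}

theorem mem_sumsetSector {q : ℝ × ℝ} :
    q ∈ sumsetSector A I ↔ q ∈ (A + A) ×ˢ (A + A) ∧ q.1 / q.2 ∈ I := by
  simp [sumsetSector]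

theorem sumsetSector_mono (h : I ⊆ J) : sumsetSector A I ⊆ sumsetSector A J :=
  fun _ hq => mem_sumsetSector.2 ⟨(mem_sumsetSector.1 hq).1, h (mem_sumsetSector.1 hq).2⟩

theorem card_sumsetSector_union (h : Disjoint I J) :
    #(sumsetSector A (I ∪ J)) = #(sumsetSector A I) + #(sumsetSector A J) := by
  rw [← card_union_of_disjoint (disjoint_left.2 fun q hI hJ =>
    h.notMem_of_mem_left (mem_sumsetSector.1 hI).2 (mem_sumsetSector.1 hJ).2)]
  congr 1
  ext q
  simp only [mem_union, mem_sumsetSector, Set.mem_union, and_or_left]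

theorem card_sumsetSector_le : #(sumsetSector A I) ≤ #(A + A) ^ 2 := by
  rw [sq, ← card_product]
  exact card_le_card fun _ hq => (mem_sumsetSector.1 hq).1

theorem card_mul_card_le_card_sumsetSector {U V : Submodule ℝ (ℝ × ℝ)} (hUV : Disjoint U V)
    {P Q : Finset (ℝ × ℝ)} (hPA : P ⊆ A ×ˢ A) (hQA : Q ⊆ A ×ˢ A)
    (hP : ∀ p ∈ P, ∀ p' ∈ P, p - p' ∈ U) (hQ : ∀ q ∈ Q, ∀ q' ∈ Q, q - q' ∈ V)
    (hI : ∀ p ∈ P, ∀ q ∈ Q, (p.1 + q.1) / (p.2 + q.2) ∈ I) :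
    #P * #Q ≤ #(sumsetSector A I) := by
  rw [← card_add_eq_mul_of_disjoint hUV hP hQ]
  refine card_le_card fun x hx => mem_sumsetSector.2 ⟨add_subset_sumset_product hPA hQA hx, ?_⟩
  obtain ⟨p, hp, q, hq, rfl⟩ := mem_add.1 hx
  exact hI p hp q hq

end sumsetSector

theorem card_mul_card_ratioLine_le {A : Finset ℝ} (hA : ∀ a ∈ A, 0 < a) {a b : ℝ} (hab : a < b) :
    #(ratioLine A a) * #(ratioLine A b) ≤ #(sumsetSector A (Set.Ioo a b)) := by
  refine card_mul_card_le_card_sumsetSector (disjoint_slopeLine hab.ne)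
    (ratioLine_subset_product A a) (ratioLine_subset_product A b)
    (sub_mem_slopeLine_of_mem_ratioLine hA) (sub_mem_slopeLine_of_mem_ratioLine hA)
    fun p hp q hq => ?_
  rw [mem_slopeLine.1 (ratioLine_subset_slopeLine hA a hp),
    mem_slopeLine.1 (ratioLine_subset_slopeLine hA b hq)]
  exact mul_add_mul_div_add_mem_Ioo (snd_pos_of_mem_ratioLine hA hp)
    (snd_pos_of_mem_ratioLine hA hq) hab

theorem card_ratioLine_mul_self_le {A : Finset ℝ} (hA : ∀ a ∈ A, 0 < a) (a : ℝ) :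
    #(ratioLine A a) * #(ratioLine A a) ≤ #(sumsetSector A (Set.Ici a)) := by
  obtain hL | ⟨p₀, hp₀⟩ := (ratioLine A a).eq_empty_or_nonempty
  · simp [hL]
  have hp₀A := mem_product.1 (ratioLine_subset_product A a hp₀)
  have ha : a ≠ 0 := by
    rw [← (mem_filter.1 hp₀).2]
    exact (div_pos (hA _ hp₀A.1) (hA _ hp₀A.2)).ne'
  have hline : ∀ q ∈ ratioLine A a, q.1 = a * q.2 :=
    fun q hq => mem_slopeLine.1 (ratioLine_subset_slopeLine hA a hq)
  set M := A.max' ⟨_, hp₀A.1⟩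
  set Q := (ratioLine A a).image fun q => (M, q.2)
  have hQ : #Q = #(ratioLine A a) := by
    refine card_image_of_injOn fun q hq q' hq' h => ?_
    have h2 : q.2 = q'.2 := (Prod.mk.inj h).2
    exact Prod.ext (by rw [hline q hq, hline q' hq', h2]) h2
  have hQ_vertical : ∀ q ∈ Q, ∀ q' ∈ Q, q - q' ∈ LinearMap.ker (LinearMap.fst ℝ ℝ ℝ) := by
    simp only [Q, mem_image]
    rintro _ ⟨q, -, rfl⟩ _ ⟨q', -, rfl⟩
    simp
  have hQA : Q ⊆ A ×ˢ A := by
    simp only [Q, image_subset_iff, mem_product]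
    exact fun q hq => ⟨A.max'_mem _, (mem_product.1 (ratioLine_subset_product A a hq)).2⟩
  nth_rw 2 [← hQ]
  refine card_mul_card_le_card_sumsetSector (disjoint_slopeLine_ker_fst ha)
    (ratioLine_subset_product A a) hQA (sub_mem_slopeLine_of_mem_ratioLine hA) hQ_vertical
    fun p hp _ hqQ => ?_
  obtain ⟨q, hq, rfl⟩ := mem_image.1 hqQ
  have hqM : q.1 ≤ M := A.le_max' _ (mem_product.1 (ratioLine_subset_product A a hq)).1
  have hp2 := snd_pos_of_mem_ratioLine hA hp
  have hq2 := snd_pos_of_mem_ratioLine hA hq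
  rw [Set.mem_Ici, le_div_iff₀ (by positivity), hline p hp]
  rw [hline q hq] at hqM
  linarith

theorem mul_sum_card_ratioLine_le {A : Finset ℝ} (hA : ∀ a ∈ A, 0 < a) {n : ℕ} (S : Finset ℝ)
    (hS : ∀ z ∈ S, n ≤ #(ratioLine A z)) {t : ℝ} (ht : ∀ z ∈ S, t ≤ z) :
    n * ∑ z ∈ S, #(ratioLine A z) ≤ #(sumsetSector A (Set.Ici t)) := by
  induction S using Finset.induction_on_min generalizing t with
  | empty => simp
  | insert a s ha_lt ih =>
    have hna := hS a (mem_insert_self a s)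
    have hta := ht a (mem_insert_self a s)
    rw [sum_insert fun has => (ha_lt a has).false, mul_add]
    obtain rfl | hs := s.eq_empty_or_nonempty
    · calc n * #(ratioLine A a) + n * ∑ z ∈ ∅, #(ratioLine A z)
            ≤ #(ratioLine A a) * #(ratioLine A a) := by simpa using Nat.mul_le_mul_right _ hna
        _ ≤ #(sumsetSector A (Set.Ici a)) := card_ratioLine_mul_self_le hA a
        _ ≤ #(sumsetSector A (Set.Ici t)) :=
            card_le_card (sumsetSector_mono (Set.Ici_subset_Ici.2 hta))
    set b := s.min' hs
    have hab : a < b := ha_lt b (s.min'_mem hs)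
    have hnb : n ≤ #(ratioLine A b) := hS b (mem_insert_of_mem (s.min'_mem hs))
    calc n * #(ratioLine A a) + n * ∑ z ∈ s, #(ratioLine A z)
        ≤ #(ratioLine A a) * #(ratioLine A b) + #(sumsetSector A (Set.Ici b)) := by
          refine add_le_add ?_ (ih (fun z hz => hS z (mem_insert_of_mem hz)) (s.min'_le · ·))
          rw [mul_comm]
          exact Nat.mul_le_mul_left _ hnb
      _ ≤ #(sumsetSector A (Set.Ioo a b)) + #(sumsetSector A (Set.Ici b)) := by
          gcongr
          exact card_mul_card_ratioLine_le hA hab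
      _ = #(sumsetSector A (Set.Ioo a b ∪ Set.Ici b)) :=
          (card_sumsetSector_union
            ((Set.Iio_disjoint_Ici le_rfl).mono_left Set.Ioo_subset_Iio_self)).symm
      _ ≤ #(sumsetSector A (Set.Ici t)) := by
          refine card_le_card (sumsetSector_mono (Set.union_subset ?_ ?_))
          · exact Set.Ioo_subset_Ioi_self.trans (Set.Ioi_subset_Ici hta)
          · exact Set.Ici_subset_Ici.2 (hta.trans hab.le)

theorem solymosi_observation_general (A : Finset ℝ) (hA : ∀ a ∈ A, 0 < a) (n : ℕ)
    (m : ℝ → ℕ) (hm : ∀ z : ℝ, m z = ((A ×ˢ A).filter (fun p => p.1 / p.2 = z)).card) :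
    (A + A).card ^ 2 ≥ n * ((A ×ˢ A).filter (fun p => n ≤ m (p.1 / p.2))).card := by
  set B := (A ×ˢ A).filter (fun p => n ≤ m (p.1 / p.2))
  set S := B.image fun p => p.1 / p.2
  have hS : ∀ z ∈ S, n ≤ #(ratioLine A z) := by
    simp only [S, B, mem_image, mem_filter]
    rintro _ ⟨p, ⟨-, hp⟩, rfl⟩
    exact hm _ ▸ hp
  have hS_nonneg : ∀ z ∈ S, 0 ≤ z := by
    simp only [S, B, mem_image, mem_filter, mem_product]
    rintro _ ⟨p, ⟨⟨hp₁, hp₂⟩, -⟩, rfl⟩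
    exact (div_pos (hA _ hp₁) (hA _ hp₂)).le
  have hB : #B = ∑ z ∈ S, #(ratioLine A z) := by
    rw [card_eq_sum_card_image (fun p => p.1 / p.2) B]
    refine sum_congr rfl fun z hz => congrArg card ?_
    ext p
    simp only [B, ratioLine, mem_filter, and_assoc]
    exact ⟨fun h => ⟨h.1, h.2.2⟩, fun h => ⟨h.1, h.2 ▸ hm z ▸ hS z hz, h.2⟩⟩
  calc (A + A).card ^ 2 ≥ #(sumsetSector A (Set.Ici 0)) := card_sumsetSector_le
    _ ≥ n * #B := hB ▸ mul_sum_card_ratioLine_le hA S hS hS_nonneg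

theorem solymosi_observation (A : Finset ℝ) (hA : ∀ a ∈ A, 0 < a) (n : ℕ) (hn : 0 < n)
    (m : ℝ → ℕ) (hm : ∀ z : ℝ, m z = ((A ×ˢ A).filter (fun p => p.1 / p.2 = z)).card) :
    (A + A).card ^ 2 ≥ n * ((A ×ˢ A).filter (fun p => n ≤ m (p.1 / p.2))).card :=
  solymosi_observation_general A hA n m hm
end
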